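/- arXiv:2503.10097 — 2 statements merged into one kernel-verified Lean document; each statement's English description precedes it below -/
import Mathlib

section
/- Let k : ℝ × ℝ → ℝ be bounded measurable, ξ a square-integrable random variable, and η a square-integrable random variable. Let ζ = E[η | σ(ξ)] be the conditional expectation of η given ξ. Then, with (ξ̃, η̃, ζ̃) an independent copy of (ξ, η, ζ), one has E[k(ξ, ξ̃) η η̃] = E[k(ξ, ξ̃) ζ ζ̃]. -/
open MeasureTheory Real

private lemma aux_condexp_mul {Ω : Type*} [mΩ : MeasurableSpace Ω] (μ : Measure Ω)
    [IsProbabilityMeasure μ] {m : MeasurableSpace Ω} (hm : m ≤ mΩ) (f g : Ω → ℝ)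
    (hf : StronglyMeasurable[m] f) (hfg : Integrable (fun ω => f ω * g ω) μ)
    (hg : Integrable g μ) :
    ∫ ω, f ω * g ω ∂μ = ∫ ω, f ω * (μ[g|m]) ω ∂μ := by
  have h1 : Integrable (f * g) μ := hfg
  have h2 : (∫ ω, f ω * g ω ∂μ) = ∫ ω, (f * g) ω ∂μ := rfl
  rw [h2, ← integral_condExp (f := f * g) hm]
  exact integral_congr_ae (condExp_mul_of_stronglyMeasurable_left hf h1 hg)

theorem stmt5
    {Ω : Type*} [mΩ : MeasurableSpace Ω] (μ : Measure Ω) [IsProbabilityMeasure μ]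
    (k : ℝ → ℝ → ℝ) (hkm : Measurable (Function.uncurry k))
    (Ck : ℝ) (hkb : ∀ x y, |k x y| ≤ Ck)
    (ξ η : Ω → ℝ) (hξm : Measurable ξ) (hηm : Measurable η) (hη : MemLp η 2 μ) :
    (∫ ω : Ω × Ω, k (ξ ω.1) (ξ ω.2) * η ω.1 * η ω.2 ∂(μ.prod μ))
      = ∫ ω : Ω × Ω, k (ξ ω.1) (ξ ω.2)
          * (μ[η | MeasurableSpace.comap ξ Real.measurableSpace]) ω.1
          * (μ[η | MeasurableSpace.comap ξ Real.measurableSpace]) ω.2 ∂(μ.prod μ) := by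
  have hm : MeasurableSpace.comap ξ Real.measurableSpace ≤ mΩ := hξm.comap_le
  set ζ : Ω → ℝ := μ[η | MeasurableSpace.comap ξ Real.measurableSpace] with hζ_def
  have hηInt : Integrable η μ := hη.integrable (by norm_num)
  have hζInt : Integrable ζ μ := integrable_condExp
  have hζsm : AEStronglyMeasurable ζ μ :=
    (stronglyMeasurable_condExp.mono hm).aestronglyMeasurable
  have hK : Measurable (fun ω : Ω × Ω => k (ξ ω.1) (ξ ω.2)) :=
    hkm.comp ((hξm.comp measurable_fst).prodMk (hξm.comp measurable_snd))
  have hKb : ∀ ω : Ω × Ω, ‖k (ξ ω.1) (ξ ω.2)‖ ≤ Ck := fun ω => hkb _ _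
  have hξm' : Measurable[MeasurableSpace.comap ξ Real.measurableSpace] ξ :=
    fun s hs => ⟨s, hs, rfl⟩
  have hk1 : ∀ a : ℝ, Measurable (fun t : ℝ => k a t) := fun a =>
    hkm.comp (measurable_const.prodMk measurable_id)
  have hk2 : ∀ a : ℝ, Measurable (fun t : ℝ => k t a) := fun a =>
    hkm.comp (measurable_id.prodMk measurable_const)
  have hηη : Integrable (fun ω : Ω × Ω => η ω.1 * η ω.2) (μ.prod μ) :=
    hηInt.mul_prod hηInt
  have hηζ : Integrable (fun ω : Ω × Ω => η ω.1 * ζ ω.2) (μ.prod μ) :=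
    hηInt.mul_prod hζInt
  have hζζ : Integrable (fun ω : Ω × Ω => ζ ω.1 * ζ ω.2) (μ.prod μ) :=
    hζInt.mul_prod hζInt
  have hI1 : Integrable (fun ω : Ω × Ω => k (ξ ω.1) (ξ ω.2) * (η ω.1 * η ω.2)) (μ.prod μ) :=
    hηη.bdd_mul hK.aestronglyMeasurable (c := Ck) (Filter.Eventually.of_forall hKb)
  have hI2 : Integrable (fun ω : Ω × Ω => k (ξ ω.1) (ξ ω.2) * (η ω.1 * ζ ω.2)) (μ.prod μ) :=
    hηζ.bdd_mul hK.aestronglyMeasurable (c := Ck) (Filter.Eventually.of_forall hKb)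
  have hI3 : Integrable (fun ω : Ω × Ω => k (ξ ω.1) (ξ ω.2) * (ζ ω.1 * ζ ω.2)) (μ.prod μ) :=
    hζζ.bdd_mul hK.aestronglyMeasurable (c := Ck) (Filter.Eventually.of_forall hKb)
  have stepA : ∀ x : Ω, ∫ y, k (ξ x) (ξ y) * (η x * η y) ∂μ
      = ∫ y, k (ξ x) (ξ y) * (η x * ζ y) ∂μ := by
    intro x
    have h1 : (fun y => k (ξ x) (ξ y) * (η x * η y))
        = fun y => (k (ξ x) (ξ y) * η x) * η y := by funext y; ring
    have h2 : (fun y => k (ξ x) (ξ y) * (η x * ζ y))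
        = fun y => (k (ξ x) (ξ y) * η x) * ζ y := by funext y; ring
    rw [h1, h2]
    refine aux_condexp_mul μ hm _ _ ?_ ?_ hηInt
    · exact ((hk1 (ξ x)).comp hξm').stronglyMeasurable.mul_const _
    · refine hηInt.bdd_mul ((((hk1 (ξ x)).comp hξm).mul_const _).aestronglyMeasurable)
        (c := Ck * |η x|) (Filter.Eventually.of_forall fun y => ?_)
      rw [Real.norm_eq_abs, abs_mul]
      exact mul_le_mul_of_nonneg_right (hkb _ _) (abs_nonneg _)
  have stepB : ∀ y : Ω, ∫ x, k (ξ x) (ξ y) * (η x * ζ y) ∂μ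
      = ∫ x, k (ξ x) (ξ y) * (ζ x * ζ y) ∂μ := by
    intro y
    have h1 : (fun x => k (ξ x) (ξ y) * (η x * ζ y))
        = fun x => (k (ξ x) (ξ y) * ζ y) * η x := by funext x; ring
    rw [h1, aux_condexp_mul μ hm (fun x => k (ξ x) (ξ y) * ζ y) η
      (((hk2 (ξ y)).comp hξm').stronglyMeasurable.mul_const _)
      (hηInt.bdd_mul ((((hk2 (ξ y)).comp hξm).mul_const _).aestronglyMeasurable)
        (c := Ck * |ζ y|) (Filter.Eventually.of_forall fun x => by
          rw [Real.norm_eq_abs, abs_mul]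
          exact mul_le_mul_of_nonneg_right (hkb _ _) (abs_nonneg _))) hηInt]
    exact integral_congr_ae (Filter.Eventually.of_forall (fun x => by ring))
  calc (∫ ω : Ω × Ω, k (ξ ω.1) (ξ ω.2) * η ω.1 * η ω.2 ∂(μ.prod μ))
      = ∫ ω : Ω × Ω, k (ξ ω.1) (ξ ω.2) * (η ω.1 * η ω.2) ∂(μ.prod μ) :=
        integral_congr_ae (Filter.Eventually.of_forall (fun ω => by ring))
    _ = ∫ x, ∫ y, k (ξ x) (ξ y) * (η x * η y) ∂μ ∂μ := integral_prod _ hI1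
    _ = ∫ x, ∫ y, k (ξ x) (ξ y) * (η x * ζ y) ∂μ ∂μ := integral_congr_ae (Filter.Eventually.of_forall (fun x => stepA x))
    _ = ∫ y, ∫ x, k (ξ x) (ξ y) * (η x * ζ y) ∂μ ∂μ := integral_integral_swap hI2
    _ = ∫ y, ∫ x, k (ξ x) (ξ y) * (ζ x * ζ y) ∂μ ∂μ := integral_congr_ae (Filter.Eventually.of_forall (fun y => stepB y))
    _ = ∫ x, ∫ y, k (ξ x) (ξ y) * (ζ x * ζ y) ∂μ ∂μ := (integral_integral_swap hI3).symm
    _ = ∫ ω : Ω × Ω, k (ξ ω.1) (ξ ω.2) * (ζ ω.1 * ζ ω.2) ∂(μ.prod μ) :=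
        (integral_prod _ hI3).symm
    _ = ∫ ω : Ω × Ω, k (ξ ω.1) (ξ ω.2) * ζ ω.1 * ζ ω.2 ∂(μ.prod μ) :=
        integral_congr_ae (Filter.Eventually.of_forall (fun ω => by ring))
end

section
/- Let k : ℝ × ℝ → ℝ be continuous and bounded such that for every square-integrable random variable ξ and every square-integrable η, with independent copies, E[k(ξ, ξ̃) η η̃] ≥ 0. Let ρ be a positive C¹ probability density on ℝ, φ₁ a bounded measurable function, and φ₂ a C¹ function with compact support. Then ∫∫ k(x, x̃) [φ₁(x) − (φ₂ρ)'(x)/ρ(x)] [φ₁(x̃) − (φ₂ρ)'(x̃)/ρ(x̃)] ρ(x) ρ(x̃) dx dx̃ ≥ 0. -/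
open MeasureTheory Real Filter
open scoped ENNReal NNReal

theorem stmt7
    (k : ℝ → ℝ → ℝ) (hk : Continuous (Function.uncurry k))
    (Ck : ℝ) (hkb : ∀ x y, |k x y| ≤ Ck)
    (hmono : ∀ (Ω : Type) (mΩ : MeasurableSpace Ω) (μ : Measure Ω),
      IsProbabilityMeasure μ →
      ∀ ξ η : Ω → ℝ, Measurable ξ → Measurable η → MemLp ξ 2 μ → MemLp η 2 μ →
        0 ≤ ∫ ω : Ω × Ω, k (ξ ω.1) (ξ ω.2) * η ω.1 * η ω.2 ∂(μ.prod μ))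
    (ρ : ℝ → ℝ) (hρ : ContDiff ℝ 1 ρ) (hρpos : ∀ x, 0 < ρ x) (hρint : ∫ x, ρ x = 1)
    (φ₁ : ℝ → ℝ) (hφ₁m : Measurable φ₁) (C₁ : ℝ) (hφ₁b : ∀ x, |φ₁ x| ≤ C₁)
    (φ₂ : ℝ → ℝ) (hφ₂ : ContDiff ℝ 1 φ₂) (hsupp : HasCompactSupport φ₂) :
    0 ≤ ∫ x, ∫ y,
        k x y * (φ₁ x - deriv (fun s => φ₂ s * ρ s) x / ρ x)
          * (φ₁ y - deriv (fun s => φ₂ s * ρ s) y / ρ y) * ρ x * ρ y := by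
  classical
  have hρc : Continuous ρ := hρ.continuous
  have hρm : Measurable ρ := hρc.measurable
  have hρ0 : ∀ x, 0 ≤ ρ x := fun x => (hρpos x).le
  have hρint' : Integrable ρ := by
    by_contra h
    rw [integral_undef h] at hρint
    norm_num at hρint
  -- the measure with density ρ
  set ν : Measure ℝ := volume.withDensity (fun x => ENNReal.ofReal (ρ x)) with hνdef
  have hprob : IsProbabilityMeasure ν := by
    constructor
    rw [hνdef, withDensity_apply _ MeasurableSet.univ, setLIntegral_univ,
      ← ofReal_integral_eq_lintegral_ofReal hρint' (Eventually.of_forall hρ0), hρint]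
    simp
  -- η and its properties
  set g : ℝ → ℝ := fun x => deriv (fun s => φ₂ s * ρ s) x / ρ x with hgdef
  have hd : ContDiff ℝ 1 (fun s => φ₂ s * ρ s) := hφ₂.mul hρ
  have hdc : Continuous (deriv (fun s => φ₂ s * ρ s)) := hd.continuous_deriv le_rfl
  have hgc : Continuous g := hdc.div hρc (fun x => (hρpos x).ne')
  have hds : HasCompactSupport (fun s => φ₂ s * ρ s) := hsupp.mul_right
  have hds' : HasCompactSupport (deriv (fun s => φ₂ s * ρ s)) := hds.deriv
  have hgs : HasCompactSupport g := by
    have : g = (fun x => deriv (fun s => φ₂ s * ρ s) x) * (fun x => (ρ x)⁻¹) := by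
      funext x; simp [hgdef, div_eq_mul_inv]
    rw [this]
    exact hds'.mul_right
  obtain ⟨Cg, hCg⟩ := hgs.exists_bound_of_continuous hgc
  set η : ℝ → ℝ := fun x => φ₁ x - g x with hηdef
  have hηm : Measurable η := hφ₁m.sub hgc.measurable
  have hηb : ∀ x, |η x| ≤ C₁ + Cg := by
    intro x
    calc |η x| ≤ |φ₁ x| + |g x| := abs_sub _ _
    _ ≤ C₁ + Cg := add_le_add (hφ₁b x) (by simpa using hCg x)
  have hCk0 : 0 ≤ Ck := le_trans (abs_nonneg _) (hkb 0 0)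
  have hCη0 : 0 ≤ C₁ + Cg := le_trans (abs_nonneg _) (hηb 0)
  -- truncations
  set ξ : ℕ → ℝ → ℝ := fun n x => max (-(n : ℝ)) (min (n : ℝ) x) with hξdef
  have hξm : ∀ n, Measurable (ξ n) := fun n =>
    measurable_const.max (measurable_const.min measurable_id)
  have hξb : ∀ n x, |ξ n x| ≤ (n : ℝ) := by
    intro n x
    rw [abs_le]
    constructor
    · exact le_max_left _ _
    · exact max_le (by simpa using (Nat.cast_nonneg n : (0:ℝ) ≤ n)) (min_le_left _ _)
  have hξeq : ∀ (x : ℝ) (n : ℕ), |x| ≤ (n : ℝ) → ξ n x = x := by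
    intro x n h
    rw [abs_le] at h
    simp only [hξdef]
    rw [min_eq_right h.2, max_eq_right h.1]
  -- the sequence of integrals
  set F : ℕ → ℝ × ℝ → ℝ := fun n ω => k (ξ n ω.1) (ξ n ω.2) * η ω.1 * η ω.2 with hFdef
  set Fi : ℝ × ℝ → ℝ := fun ω => k ω.1 ω.2 * η ω.1 * η ω.2 with hFid
  have hFm : ∀ n, Measurable (F n) := by
    intro n
    exact ((hk.measurable.comp (((hξm n).comp measurable_fst).prodMk
      ((hξm n).comp measurable_snd))).mul (hηm.comp measurable_fst)).mul
      (hηm.comp measurable_snd)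
  have hFim : Measurable Fi :=
    ((hk.measurable.comp (measurable_fst.prodMk measurable_snd)).mul
      (hηm.comp measurable_fst)).mul (hηm.comp measurable_snd)
  have hpos : ∀ n, 0 ≤ ∫ ω : ℝ × ℝ, F n ω ∂(ν.prod ν) := by
    intro n
    refine hmono ℝ _ ν hprob (ξ n) η (hξm n) hηm ?_ ?_
    · exact MemLp.of_bound (hξm n).aestronglyMeasurable (n : ℝ)
        (Eventually.of_forall fun x => by simpa using hξb n x)
    · exact MemLp.of_bound hηm.aestronglyMeasurable (C₁ + Cg)
        (Eventually.of_forall fun x => by simpa using hηb x)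
  have hbound : ∀ (a b c d : ℝ), |k a b * η c * η d| ≤ Ck * ((C₁ + Cg) * (C₁ + Cg)) := by
    intro a b c d
    rw [abs_mul, abs_mul]
    calc |k a b| * |η c| * |η d| ≤ Ck * (C₁ + Cg) * (C₁ + Cg) := by
          gcongr
          · exact hkb a b
          · exact hηb c
          · exact hηb d
    _ = Ck * ((C₁ + Cg) * (C₁ + Cg)) := by ring
  have hlim : Tendsto (fun n => ∫ ω : ℝ × ℝ, F n ω ∂(ν.prod ν)) atTop
      (nhds (∫ ω : ℝ × ℝ, Fi ω ∂(ν.prod ν))) := by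
    refine tendsto_integral_of_dominated_convergence
      (fun _ => Ck * ((C₁ + Cg) * (C₁ + Cg)))
      (fun n => (hFm n).aestronglyMeasurable) (integrable_const _)
      (fun n => Eventually.of_forall fun ω => by
        simpa [Real.norm_eq_abs, hFdef] using hbound (ξ n ω.1) (ξ n ω.2) ω.1 ω.2) ?_
    refine Eventually.of_forall fun ω => ?_
    have hev : ∀ᶠ n in atTop, F n ω = Fi ω := by
      filter_upwards [eventually_ge_atTop (⌈max |ω.1| |ω.2|⌉₊)] with n hn
      have h1 : |ω.1| ≤ (n : ℝ) :=
        le_trans (le_trans (le_max_left _ _) (Nat.le_ceil _)) (by exact_mod_cast hn)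
      have h2 : |ω.2| ≤ (n : ℝ) :=
        le_trans (le_trans (le_max_right _ _) (Nat.le_ceil _)) (by exact_mod_cast hn)
      simp only [hFdef, hFid, hξeq _ _ h1, hξeq _ _ h2]
    exact Tendsto.congr' (hev.mono fun n h => h.symm) tendsto_const_nhds
  have hnonneg : 0 ≤ ∫ ω : ℝ × ℝ, Fi ω ∂(ν.prod ν) := ge_of_tendsto' hlim hpos
  -- identify the integral
  have hFint : Integrable Fi (ν.prod ν) := by
    refine Integrable.mono' (integrable_const (Ck * ((C₁ + Cg) * (C₁ + Cg))))
      hFim.aestronglyMeasurable ?_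
    exact Eventually.of_forall fun ω => by
      simpa [Real.norm_eq_abs, hFid] using hbound ω.1 ω.2 ω.1 ω.2
  have hwd : ∀ f : ℝ → ℝ, ∫ x, f x ∂ν = ∫ x, ρ x * f x := by
    intro f
    have h2 := integral_withDensity_eq_integral_smul (μ := volume)
      (f := fun x => (ρ x).toNNReal) (measurable_real_toNNReal.comp hρm) f
    rw [hνdef,
      show (fun x => ENNReal.ofReal (ρ x)) = (fun x => ((ρ x).toNNReal : ℝ≥0∞)) from rfl, h2]
    congr 1
    funext x
    simp [NNReal.smul_def, Real.coe_toNNReal _ (hρ0 x)]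
  have key : ∫ ω : ℝ × ℝ, Fi ω ∂(ν.prod ν)
      = ∫ x, ∫ y, k x y * η x * η y * ρ x * ρ y := by
    rw [integral_prod _ hFint]
    rw [hwd (fun x => ∫ y, Fi (x, y) ∂ν)]
    congr 1
    funext x
    rw [hwd (fun y => Fi (x, y)), ← integral_const_mul]
    congr 1
    funext y
    simp only [hFid]
    ring
  rw [key] at hnonneg
  exact hnonneg
end
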